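/- Let 0<q<1, a≥0 and b≥1 integers, and n a positive integer. Then H_n^*[{2}^a, 1, {2}^b] = -∑_{k=1}^n ((1+q^k)/[k]_q^{2(a+b)+1}) ([n choose k]_q/[n+k choose k]_q) (-1)^k q^{k(k+1)/2+(a+b)k} - ∑_{k=1}^n ((1+q^k)/[k]_q^{2a+1}) ([n choose k]_q/[n+k choose k]_q) q^{k^2+ak} ∑_{j=1}^{k-1} (-1)^j (1+q^j) q^{bj - j(j+1)/2}/[j]_q^{2b}. -/

import Mathlib

/-!
Everything is expanded in the basis `c_n(k) = [n choose k]_q / [n+k choose k]_q`, `1 ≤ k ≤ n`.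
Multiplying by `q^m / [m]_q^2` and summing over `m ≤ n` acts diagonally on this basis,
`∑_{m ≤ n} q^m/[m]_q^2 c_m(k) = q^k/[k]_q^2 c_n(k)`, and `q^m / [m]_q` acts triangularly; both
follow by telescoping from the explicit form `c_n(k) = (q;q)_n^2 / ((q;q)_{n-k} (q;q)_{n+k})`.
So an expansion of `H_n^*[s]` in the basis yields those of `H_n^*[2, s]` and `H_n^*[1, s]`.
The expansion of `H_n^*[{2}^b]` starts from `∑_{k=1}^n (-1)^k (1 + q^k) q^{k(k-1)/2} c_n(k) = -1`,
which is the q-binomial theorem for `∏_{i < 2n} (1 - q^{i-n}) = 0`, its terms paired around the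
middle.
-/

open Finset

/-- q-analogue of a natural number: [m]_q = (1-q^m)/(1-q). -/
noncomputable def qnum (q : ℝ) (m : ℕ) : ℝ := (1 - q ^ m) / (1 - q)

/-- q-Pochhammer (q;q)_n = ∏_{k=0}^{n-1} (1 - q^{k+1}). -/
noncomputable def qPoch (q : ℝ) (n : ℕ) : ℝ := ∏ k ∈ Finset.range n, (1 - q ^ (k + 1))

/-- Gaussian q-binomial coefficient, 0 when m > n. -/
noncomputable def qbinom (q : ℝ) (n m : ℕ) : ℝ :=
  if m ≤ n then qPoch q n / (qPoch q m * qPoch q (n - m)) else 0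

/-- q-multiple harmonic star sum H_n^*[s₁,…,s_m]. -/
noncomputable def qHstar (q : ℝ) : List ℕ → ℕ → ℝ
  | [], _ => 1
  | s :: rest, n => ∑ k ∈ Finset.Icc 1 n, q ^ k / qnum q k ^ s * qHstar q rest k

/-- q-multiple zeta star value ζ_q^*[s₁,…,s_m]. -/
noncomputable def qZetaStar (q : ℝ) : List ℕ → ℝ
  | [] => 1
  | s :: rest => ∑' k : ℕ, q ^ (k + 1) / qnum q (k + 1) ^ s * qHstar q rest (k + 1)

/-- strict multiple harmonic sum ∑_{n ≥ k₁ > … > k_r ≥ 1} ∏ 1/k_j^{p_j}. -/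
noncomputable def Hstrict : List ℕ → ℕ → ℝ
  | [], _ => 1
  | p :: rest, n => ∑ k ∈ Finset.Icc 1 n, (1 : ℝ) / (k : ℝ) ^ p * Hstrict rest (k - 1)

/-- binomial-weighted strict multiple harmonic sum Ĥ_n(p). -/
noncomputable def Hhat : List ℕ → ℕ → ℝ
  | [], _ => 1
  | p :: rest, n => ∑ k ∈ Finset.Icc 1 n,
      ((n.choose k : ℝ) / ((n + k).choose n)) * ((1 : ℝ) / (k : ℝ) ^ p) * Hstrict rest (k - 1)

/-- ordinary multiple harmonic star sum H_n^*(s₁,…,s_m). -/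
noncomputable def HstarO : List ℕ → ℕ → ℝ
  | [], _ => 1
  | s :: rest, n => ∑ k ∈ Finset.Icc 1 n, (1 : ℝ) / (k : ℝ) ^ s * HstarO rest k

/-- ordinary multiple zeta star value. -/
noncomputable def zetaStarO : List ℕ → ℝ
  | [] => 1
  | s :: rest => ∑' k : ℕ, (1 : ℝ) / ((k : ℝ) + 1) ^ s * HstarO rest (k + 1)

/-- Merge a list of parts according to a comma(true)/plus(false) pattern. -/
def mergeComp : ℕ → List ℕ → List Bool → List ℕ
  | a, [], _ => [a]
  | a, _ :: _, [] => [a]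
  | a, b :: t, true :: bs => a :: mergeComp b t bs
  | a, b :: t, false :: bs => mergeComp (a + b) t bs

lemma one_sub_pow_ne_zero {q : ℝ} (hq : |q| < 1) {i : ℕ} (hi : i ≠ 0) : 1 - q ^ i ≠ 0 := by
  have h : |q ^ i| < 1 := by rw [abs_pow]; exact pow_lt_one₀ (abs_nonneg q) hq hi
  intro h'
  rw [← sub_eq_zero.mp h', abs_one] at h
  exact lt_irrefl _ h

lemma one_sub_ne_zero_of_abs_lt_one {q : ℝ} (hq : |q| < 1) : 1 - q ≠ 0 := by
  simpa using one_sub_pow_ne_zero hq one_ne_zero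

lemma qnum_ne_zero {q : ℝ} (hq : |q| < 1) {m : ℕ} (hm : m ≠ 0) : qnum q m ≠ 0 :=
  div_ne_zero (one_sub_pow_ne_zero hq hm) (one_sub_ne_zero_of_abs_lt_one hq)

lemma qPoch_zero (q : ℝ) : qPoch q 0 = 1 := prod_range_zero _

lemma qPoch_succ (q : ℝ) (n : ℕ) : qPoch q (n + 1) = qPoch q n * (1 - q ^ (n + 1)) :=
  prod_range_succ _ _

lemma qPoch_ne_zero {q : ℝ} (hq : |q| < 1) (n : ℕ) : qPoch q n ≠ 0 :=
  prod_ne_zero_iff.mpr fun i _ => one_sub_pow_ne_zero hq i.succ_ne_zero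

lemma qbinom_of_le {q : ℝ} {n k : ℕ} (h : k ≤ n) :
    qbinom q n k = qPoch q n / (qPoch q k * qPoch q (n - k)) := if_pos h

lemma qbinom_of_lt {q : ℝ} {n k : ℕ} (h : n < k) : qbinom q n k = 0 := if_neg (by omega)

lemma qbinom_zero_right {q : ℝ} (hq : |q| < 1) (n : ℕ) : qbinom q n 0 = 1 := by
  rw [qbinom_of_le n.zero_le, qPoch_zero, one_mul, Nat.sub_zero, div_self (qPoch_ne_zero hq n)]

lemma qbinom_self {q : ℝ} (hq : |q| < 1) (n : ℕ) : qbinom q n n = 1 := by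
  rw [qbinom_of_le le_rfl, Nat.sub_self, qPoch_zero, mul_one, div_self (qPoch_ne_zero hq n)]

lemma qbinom_sub {q : ℝ} {n k : ℕ} (h : k ≤ n) : qbinom q n (n - k) = qbinom q n k := by
  rw [qbinom_of_le (Nat.sub_le n k), qbinom_of_le h, Nat.sub_sub_self h, mul_comm]

lemma qbinom_succ_succ {q : ℝ} (hq : |q| < 1) (n k : ℕ) :
    qbinom q (n + 1) (k + 1) = qbinom q n (k + 1) + q ^ (n - k) * qbinom q n k := by
  rcases lt_trichotomy k n with hkn | rfl | hnk
  · obtain ⟨d, rfl⟩ := Nat.exists_eq_add_of_lt hkn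
    rw [qbinom_of_le (by omega), qbinom_of_le (by omega), qbinom_of_le (by omega),
      show k + d + 1 + 1 - (k + 1) = d + 1 by omega, show k + d + 1 - (k + 1) = d by omega,
      show k + d + 1 - k = d + 1 by omega, qPoch_succ q (k + d + 1), qPoch_succ q k, qPoch_succ q d,
      show q ^ (k + d + 1 + 1) = q ^ (d + 1) * q ^ (k + 1) by ring]
    have := qPoch_ne_zero hq (k + d + 1)
    have := qPoch_ne_zero hq k
    have := qPoch_ne_zero hq d
    have := one_sub_pow_ne_zero hq (Nat.succ_ne_zero d)
    have := one_sub_pow_ne_zero hq (Nat.succ_ne_zero k)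
    field_simp
    ring
  · rw [qbinom_self hq, qbinom_self hq, qbinom_of_lt (Nat.lt_succ_self k), Nat.sub_self]
    ring
  · rw [qbinom_of_lt (by omega), qbinom_of_lt (by omega), qbinom_of_lt hnk]
    ring

noncomputable def qbinomRatio (q : ℝ) (n k : ℕ) : ℝ := qbinom q n k / qbinom q (n + k) k

lemma qbinomRatio_of_le {q : ℝ} (hq : |q| < 1) {n k : ℕ} (h : k ≤ n) :
    qbinomRatio q n k = qPoch q n ^ 2 / (qPoch q (n - k) * qPoch q (n + k)) := by
  rw [qbinomRatio, qbinom_of_le h, qbinom_of_le (Nat.le_add_left k n), Nat.add_sub_cancel]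
  have := qPoch_ne_zero hq k
  have := qPoch_ne_zero hq (n - k)
  have := qPoch_ne_zero hq n
  have := qPoch_ne_zero hq (n + k)
  field_simp

lemma qbinomRatio_of_lt {q : ℝ} {n k : ℕ} (h : n < k) : qbinomRatio q n k = 0 := by
  rw [qbinomRatio, qbinom_of_lt h, zero_div]

lemma qbinomRatio_succ_sub {q : ℝ} (hq : |q| < 1) {n k : ℕ} (hk : k ≠ 0) (hkn : k ≤ n + 1) :
    qbinomRatio q (n + 1) k - qbinomRatio q n k
      = qbinomRatio q (n + 1) k * q ^ (n + 1 - k) * (1 - q ^ k) ^ 2 / (1 - q ^ (n + 1)) ^ 2 := by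
  have := one_sub_pow_ne_zero hq (Nat.succ_ne_zero n)
  rcases hkn.eq_or_lt with rfl | hkn
  · rw [qbinomRatio_of_lt (Nat.lt_succ_self n), Nat.sub_self]
    field_simp
    ring
  obtain ⟨d, rfl⟩ := Nat.exists_eq_add_of_le (Nat.le_of_lt_succ hkn)
  rw [qbinomRatio_of_le hq hkn.le, qbinomRatio_of_le hq (Nat.le_add_right k d),
    show k + d + 1 - k = d + 1 by omega, Nat.add_sub_cancel_left,
    show k + d + 1 + k = k + d + k + 1 by omega, qPoch_succ q (k + d), qPoch_succ q d,
    qPoch_succ q (k + d + k)]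
  have := qPoch_ne_zero hq (k + d)
  have := qPoch_ne_zero hq d
  have := qPoch_ne_zero hq (k + d + k)
  have := one_sub_pow_ne_zero hq (Nat.succ_ne_zero d)
  have := one_sub_pow_ne_zero hq (Nat.succ_ne_zero (k + d + k))
  field_simp
  ring

lemma qbinomRatio_mul_one_sub_pow {q : ℝ} (hq : |q| < 1) {n k : ℕ} (h : k < n) :
    qbinomRatio q n k * (1 - q ^ (n - k)) = qbinomRatio q n (k + 1) * (1 - q ^ (n + k + 1)) := by
  rw [qbinomRatio_of_le hq h.le, qbinomRatio_of_le hq h, show n - k = n - (k + 1) + 1 by omega,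
    show n + (k + 1) = n + k + 1 by omega, qPoch_succ, qPoch_succ]
  have := qPoch_ne_zero hq n
  have := qPoch_ne_zero hq (n - (k + 1))
  have := qPoch_ne_zero hq (n + k)
  have := one_sub_pow_ne_zero hq (Nat.succ_ne_zero (n - (k + 1)))
  have := one_sub_pow_ne_zero hq (Nat.succ_ne_zero (n + k))
  field_simp

lemma triangle_add (a b : ℕ) :
    (a + b) * (a + b - 1) / 2 = a * (a - 1) / 2 + b * (b - 1) / 2 + a * b := by
  induction b with
  | zero => simp
  | succ b ih => rw [← add_assoc, Nat.triangle_succ, ih, Nat.triangle_succ]; ring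

lemma triangle_add_triangle_add_eq_mul_self (k : ℕ) :
    k * (k - 1) / 2 + k * (k - 1) / 2 + k = k * k := by
  induction k with
  | zero => rfl
  | succ k ih => rw [Nat.triangle_succ]; nlinarith [ih]

lemma pow_triangle_succ (q : ℝ) (k : ℕ) :
    q ^ (k * (k + 1) / 2) = q ^ (k * (k - 1) / 2) * q ^ k := by
  rw [← pow_add, mul_comm, ← Nat.triangle_succ, Nat.add_sub_cancel]

noncomputable def qbinomWeight (q z : ℝ) (j : ℕ) : ℝ :=
  (-1) ^ j * q ^ (j * (j - 1) / 2) * z ^ j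

lemma qbinomWeight_succ (q z : ℝ) (j : ℕ) :
    qbinomWeight q z (j + 1) = -(z * q ^ j) * qbinomWeight q z j := by
  simp only [qbinomWeight, Nat.triangle_succ, pow_add]
  ring

lemma qbinomWeight_add (q z : ℝ) (i k : ℕ) :
    qbinomWeight q z (i + k) = qbinomWeight q z i * qbinomWeight q z k * q ^ (i * k) := by
  simp only [qbinomWeight, triangle_add, pow_add]
  ring

lemma qbinomWeight_add_of_pow_mul_eq_one {q z : ℝ} {n : ℕ} (hqz : q ^ n * z = 1) (k : ℕ) :
    qbinomWeight q z (n + k) = qbinomWeight q z n * ((-1) ^ k * q ^ (k * (k - 1) / 2)) := by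
  rw [qbinomWeight_add, pow_mul, show qbinomWeight q z k = (-1) ^ k * q ^ (k * (k - 1) / 2) * z ^ k
    from rfl]
  linear_combination (qbinomWeight q z n * (-1) ^ k * q ^ (k * (k - 1) / 2))
    * (congrArg (· ^ k) hqz).trans (one_pow k)

lemma qbinomWeight_sub_of_pow_mul_eq_one {q z : ℝ} {n k : ℕ} (hqz : q ^ n * z = 1)
    (hk : k ≤ n) :
    qbinomWeight q z (n - k)
      = qbinomWeight q z n * ((-1) ^ k * q ^ (k * (k - 1) / 2) * q ^ k) := by
  have hsplit := qbinomWeight_add q z (n - k) k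
  rw [Nat.sub_add_cancel hk] at hsplit
  have hcancel : qbinomWeight q z k * q ^ ((n - k) * k)
      * ((-1) ^ k * q ^ (k * (k - 1) / 2) * q ^ k) = 1 := by
    calc qbinomWeight q z k * q ^ ((n - k) * k) * ((-1) ^ k * q ^ (k * (k - 1) / 2) * q ^ k)
        = ((-1) ^ k) ^ 2 * (q ^ (k * (k - 1) / 2 + k * (k - 1) / 2 + k + (n - k) * k) * z ^ k) := by
          simp only [qbinomWeight, pow_add]; ring
      _ = 1 := by
          rw [triangle_add_triangle_add_eq_mul_self, ← add_mul, Nat.add_sub_cancel' hk, pow_mul,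
            ← mul_pow, hqz, ← pow_mul, pow_mul', neg_one_sq]
          simp
  rw [hsplit]
  linear_combination (-qbinomWeight q z (n - k)) * hcancel

lemma sum_range_qbinomWeight_mul_qbinom {q : ℝ} (hq : |q| < 1) (z : ℝ) (m : ℕ) :
    ∑ j ∈ range (m + 1), qbinomWeight q z j * qbinom q m j
      = ∏ i ∈ range m, (1 - z * q ^ i) := by
  induction m with
  | zero => simp [qbinom_self hq, qbinomWeight]
  | succ m ih =>
    have hpascal : ∀ j ∈ range (m + 1),
        qbinomWeight q z (j + 1) * qbinom q (m + 1) (j + 1)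
          = qbinomWeight q z (j + 1) * qbinom q m (j + 1)
            - z * q ^ m * (qbinomWeight q z j * qbinom q m j) := fun j hj => by
      rw [qbinom_succ_succ hq, qbinomWeight_succ,
        show q ^ m = q ^ j * q ^ (m - j) by rw [← pow_add, Nat.add_sub_cancel' (by grind)]]
      ring
    have hlast : ∑ j ∈ range (m + 1 + 1), qbinomWeight q z j * qbinom q m j
        = ∑ j ∈ range (m + 1), qbinomWeight q z j * qbinom q m j := by
      rw [sum_range_succ, qbinom_of_lt (Nat.lt_succ_self m), mul_zero, add_zero]
    rw [prod_range_succ, ← ih, sum_range_succ', sum_congr rfl hpascal, sum_sub_distrib,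
      ← mul_sum, ← hlast, sum_range_succ' _ (m + 1), qbinom_zero_right hq, qbinom_zero_right hq]
    ring

lemma sum_range_two_mul_add_one {M : Type*} [AddCommMonoid M] (f : ℕ → M) (n : ℕ) :
    ∑ j ∈ range (2 * n + 1), f j = f n + ∑ k ∈ Icc 1 n, (f (n - k) + f (n + k)) := by
  induction n generalizing f with
  | zero => simp
  | succ n ih =>
    rw [show 2 * (n + 1) + 1 = 2 * n + 1 + 1 + 1 by ring, sum_range_succ', sum_range_succ,
      ih fun j => f (j + 1), sum_Icc_succ_top (by omega), Nat.sub_self]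
    have hshift : ∑ k ∈ Icc 1 n, (f (n - k + 1) + f (n + k + 1))
        = ∑ k ∈ Icc 1 n, (f (n + 1 - k) + f (n + 1 + k)) :=
      sum_congr rfl fun k hk => by rw [Nat.sub_add_comm (mem_Icc.mp hk).2, Nat.add_right_comm]
    rw [hshift, show 2 * n + 1 + 1 = n + 1 + (n + 1) by ring]
    abel

lemma qbinom_ne_zero {q : ℝ} (hq : |q| < 1) {n k : ℕ} (h : k ≤ n) : qbinom q n k ≠ 0 := by
  rw [qbinom_of_le h]
  exact div_ne_zero (qPoch_ne_zero hq n) (mul_ne_zero (qPoch_ne_zero hq k) (qPoch_ne_zero hq _))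

lemma qbinom_two_mul_add {q : ℝ} (hq : |q| < 1) {n k : ℕ} (h : k ≤ n) :
    qbinom q (2 * n) (n + k) = qbinom q (2 * n) n * qbinomRatio q n k := by
  rw [qbinomRatio_of_le hq h, qbinom_of_le (by omega), qbinom_of_le (by omega),
    show 2 * n - (n + k) = n - k by omega, show 2 * n - n = n by omega]
  have := qPoch_ne_zero hq (2 * n)
  have := qPoch_ne_zero hq n
  have := qPoch_ne_zero hq (n - k)
  have := qPoch_ne_zero hq (n + k)
  field_simp

lemma sum_Icc_neg_one_pow_mul_qbinomRatio {q : ℝ} (hq : |q| < 1) (hq0 : q ≠ 0) {n : ℕ}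
    (hn : n ≠ 0) :
    ∑ k ∈ Icc 1 n, (-1) ^ k * (1 + q ^ k) * q ^ (k * (k - 1) / 2) * qbinomRatio q n k = -1 := by
  set z : ℝ := (q ^ n)⁻¹
  have hqz : q ^ n * z = 1 := mul_inv_cancel₀ (pow_ne_zero n hq0)
  have hpair : ∀ k ∈ Icc 1 n,
      qbinomWeight q z (n - k) * qbinom q (2 * n) (n - k)
        + qbinomWeight q z (n + k) * qbinom q (2 * n) (n + k)
      = qbinomWeight q z n * qbinom q (2 * n) n
        * ((-1) ^ k * (1 + q ^ k) * q ^ (k * (k - 1) / 2) * qbinomRatio q n k) := by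
    intro k hk
    have hkn := (mem_Icc.mp hk).2
    rw [show n - k = 2 * n - (n + k) by omega, qbinom_sub (by omega),
      ← show n - k = 2 * n - (n + k) by omega, qbinomWeight_sub_of_pow_mul_eq_one hqz hkn,
      qbinomWeight_add_of_pow_mul_eq_one hqz, qbinom_two_mul_add hq hkn]
    ring
  have hvanish : ∑ j ∈ range (2 * n + 1), qbinomWeight q z j * qbinom q (2 * n) j = 0 := by
    rw [sum_range_qbinomWeight_mul_qbinom hq]
    exact prod_eq_zero (mem_range.mpr (by omega : n < 2 * n)) (by rw [mul_comm, hqz, sub_self])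
  rw [sum_range_two_mul_add_one, sum_congr rfl hpair, ← mul_sum] at hvanish
  have hcentral : qbinomWeight q z n * qbinom q (2 * n) n ≠ 0 :=
    mul_ne_zero (by simp [qbinomWeight, hq0, z]) (qbinom_ne_zero hq (by omega))
  exact mul_left_cancel₀ hcentral (by linear_combination hvanish)

lemma sum_pow_div_qnum_sq_mul_qbinomRatio {q : ℝ} (hq : |q| < 1) {k : ℕ} (hk : k ≠ 0)
    (n : ℕ) :
    ∑ m ∈ Icc 1 n, q ^ m / qnum q m ^ 2 * qbinomRatio q m k
      = q ^ k / qnum q k ^ 2 * qbinomRatio q n k := by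
  induction n with
  | zero => simp [qbinomRatio_of_lt (Nat.pos_of_ne_zero hk)]
  | succ n ih =>
    rw [sum_Icc_succ_top (by omega), ih]
    rcases lt_or_ge (n + 1) k with h | h
    · rw [qbinomRatio_of_lt h, qbinomRatio_of_lt (by omega)]
      ring
    have hsub := qbinomRatio_succ_sub hq hk h
    unfold qnum
    rw [show q ^ (n + 1) = q ^ (n + 1 - k) * q ^ k by rw [← pow_add, Nat.sub_add_cancel h]]
      at hsub ⊢
    have := one_sub_pow_ne_zero hq hk
    have := one_sub_ne_zero_of_abs_lt_one hq
    have : 1 - q ^ (n + 1 - k) * q ^ k ≠ 0 := by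
      rw [← pow_add, Nat.sub_add_cancel h]; exact one_sub_pow_ne_zero hq (Nat.succ_ne_zero n)
    rw [← sub_sub_cancel (qbinomRatio q (n + 1) k) (qbinomRatio q n k), hsub]
    field_simp
    ring

lemma sum_Icc_one_sub_pow_mul_qbinomRatio {q : ℝ} (hq : |q| < 1) {k N : ℕ} (hkN : k ≤ N) :
    ∑ l ∈ Icc (k + 1) N, (1 - q ^ (2 * l)) * q ^ (l * (l - 1)) * qbinomRatio q N l
      = q ^ (k * k + k) * (1 - q ^ (N - k)) * qbinomRatio q N k := by
  set g : ℕ → ℝ := fun l => -(q ^ (l * (l + 1)) * (1 - q ^ (N - l)) * qbinomRatio q N l)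
    with hg
  have hstep : ∀ l < N,
      (1 - q ^ (2 * (l + 1))) * q ^ ((l + 1) * (l + 1 - 1)) * qbinomRatio q N (l + 1)
        = g (l + 1) - g l := by
    intro l hl
    have hdown := qbinomRatio_mul_one_sub_pow hq hl
    rw [show q ^ (N + l + 1) = q ^ (2 * (l + 1)) * q ^ (N - (l + 1)) by
      rw [← pow_add]; congr 1; omega] at hdown
    simp only [hg, Nat.add_sub_cancel,
      show (l + 1) * (l + 1 + 1) = (l + 1) * l + 2 * (l + 1) by ring, pow_add, mul_comm l (l + 1)]
    linear_combination (-q ^ ((l + 1) * l)) * hdown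
  calc ∑ l ∈ Icc (k + 1) N, (1 - q ^ (2 * l)) * q ^ (l * (l - 1)) * qbinomRatio q N l
      = ∑ l ∈ Ico k N, (1 - q ^ (2 * (l + 1))) * q ^ ((l + 1) * (l + 1 - 1))
          * qbinomRatio q N (l + 1) := by
        rw [sum_Ico_add' (fun l => (1 - q ^ (2 * l)) * q ^ (l * (l - 1)) * qbinomRatio q N l),
          Ico_add_one_right_eq_Icc]
    _ = ∑ l ∈ Ico k N, (g (l + 1) - g l) := sum_congr rfl fun l hl => hstep l (mem_Ico.mp hl).2
    _ = q ^ (k * k + k) * (1 - q ^ (N - k)) * qbinomRatio q N k := by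
        rw [sum_Ico_sub g hkN]
        simp only [hg, Nat.sub_self, pow_zero, sub_self, mul_zero, zero_mul, neg_zero]
        ring

lemma qbinomRatio_succ_sub_mul {q : ℝ} (hq : |q| < 1) (hq0 : q ≠ 0) {n k l : ℕ} (hl : l ≠ 0)
    (hln : l ≤ n + 1) :
    (1 + q ^ l) / qnum q l * (q ^ (l * l) / q ^ (k * k))
        * (qbinomRatio q (n + 1) l - qbinomRatio q n l)
      = (1 - q) * q ^ (n + 1) / ((1 - q ^ (n + 1)) ^ 2 * q ^ (k * k))
        * ((1 - q ^ (2 * l)) * q ^ (l * (l - 1)) * qbinomRatio q (n + 1) l) := by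
  have h1 := one_sub_pow_ne_zero hq hl
  have h2 : 1 - q ^ (n + 1) ≠ 0 := one_sub_pow_ne_zero hq (by omega)
  have h3 := one_sub_ne_zero_of_abs_lt_one hq
  have h4 : q ^ (k * k) ≠ 0 := pow_ne_zero _ hq0
  have hsplit : q ^ (n + 1) = q ^ (n + 1 - l) * q ^ l := by rw [← pow_add, Nat.sub_add_cancel hln]
  rw [qbinomRatio_succ_sub hq hl hln, qnum,
    show q ^ (l * l) = q ^ (l * (l - 1)) * q ^ l by
      rw [← pow_add, Nat.mul_sub_one, Nat.sub_add_cancel (Nat.le_mul_self l)],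
    two_mul, pow_add q l l, hsplit]
  rw [hsplit] at h2
  field_simp
  ring

lemma pow_div_qnum_mul_qbinomRatio_succ {q : ℝ} (hq : |q| < 1) (hq0 : q ≠ 0) {n k : ℕ}
    (hk : k ≠ 0) (hkn : k ≤ n + 1) :
    q ^ (n + 1) / qnum q (n + 1) * qbinomRatio q (n + 1) k
      = q ^ k / qnum q k * (qbinomRatio q (n + 1) k - qbinomRatio q n k)
        + ∑ l ∈ Icc (k + 1) (n + 1), (1 + q ^ l) / qnum q l * (q ^ (l * l) / q ^ (k * k))
          * (qbinomRatio q (n + 1) l - qbinomRatio q n l) := by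
  rw [sum_congr rfl fun l hl => qbinomRatio_succ_sub_mul hq hq0 (by grind)
      (mem_Icc.mp hl).2, ← mul_sum, sum_Icc_one_sub_pow_mul_qbinomRatio hq hkn,
    qbinomRatio_succ_sub hq hk hkn, qnum, qnum]
  have h1 := one_sub_pow_ne_zero hq hk
  have h2 := one_sub_pow_ne_zero hq (Nat.succ_ne_zero n)
  have h3 := one_sub_ne_zero_of_abs_lt_one hq
  have h4 : q ^ (k * k) ≠ 0 := pow_ne_zero _ hq0
  have hsplit : q ^ (n + 1) = q ^ (n + 1 - k) * q ^ k := by rw [← pow_add, Nat.sub_add_cancel hkn]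
  rw [pow_add q (k * k) k]
  field_simp
  rw [hsplit]
  ring

lemma sum_pow_div_qnum_mul_qbinomRatio {q : ℝ} (hq : |q| < 1) (hq0 : q ≠ 0) {k : ℕ}
    (hk : k ≠ 0) (n : ℕ) :
    ∑ m ∈ Icc 1 n, q ^ m / qnum q m * qbinomRatio q m k
      = q ^ k / qnum q k * qbinomRatio q n k
        + ∑ l ∈ Icc (k + 1) n, (1 + q ^ l) / qnum q l * (q ^ (l * l) / q ^ (k * k))
          * qbinomRatio q n l := by
  induction n with
  | zero => simp [qbinomRatio_of_lt (Nat.pos_of_ne_zero hk)]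
  | succ n ih =>
    rw [sum_Icc_succ_top (by omega), ih]
    rcases lt_or_ge (n + 1) k with h | h
    · rw [qbinomRatio_of_lt h, qbinomRatio_of_lt (by omega : n < k), Icc_eq_empty (by omega),
        Icc_eq_empty (by omega)]
      simp
    have hext : ∑ l ∈ Icc (k + 1) n, (1 + q ^ l) / qnum q l * (q ^ (l * l) / q ^ (k * k))
          * qbinomRatio q n l
        = ∑ l ∈ Icc (k + 1) (n + 1), (1 + q ^ l) / qnum q l * (q ^ (l * l) / q ^ (k * k))
          * qbinomRatio q n l := by
      refine sum_subset (Icc_subset_Icc_right n.le_succ) fun l hl hl' => ?_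
      rw [qbinomRatio_of_lt (by grind), mul_zero]
    rw [hext, pow_div_qnum_mul_qbinomRatio_succ hq hq0 hk h]
    simp only [mul_sub, sum_sub_distrib]
    ring

lemma sum_mul_sum_qbinomRatio_comm (q : ℝ) (u W : ℕ → ℝ) (n : ℕ) :
    ∑ m ∈ Icc 1 n, u m * ∑ k ∈ Icc 1 m, W k * qbinomRatio q m k
      = ∑ k ∈ Icc 1 n, W k * ∑ m ∈ Icc 1 n, u m * qbinomRatio q m k := by
  have hextend : ∀ m ∈ Icc 1 n, ∑ k ∈ Icc 1 m, W k * qbinomRatio q m k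
      = ∑ k ∈ Icc 1 n, W k * qbinomRatio q m k := fun m hm =>
    sum_subset (Icc_subset_Icc_right (mem_Icc.mp hm).2) fun k _ hk => by
      rw [qbinomRatio_of_lt (by grind), mul_zero]
  rw [sum_congr rfl fun m hm => by rw [hextend m hm]]
  simp only [mul_sum]
  rw [sum_comm]
  exact sum_congr rfl fun k _ => sum_congr rfl fun m _ => by ring

lemma qHstar_two_cons {q : ℝ} (hq : |q| < 1) {s : List ℕ} {W : ℕ → ℝ}
    (hs : ∀ m, 1 ≤ m → qHstar q s m = ∑ k ∈ Icc 1 m, W k * qbinomRatio q m k) (n : ℕ) :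
    qHstar q (2 :: s) n = ∑ k ∈ Icc 1 n, q ^ k / qnum q k ^ 2 * W k * qbinomRatio q n k := by
  calc qHstar q (2 :: s) n
      = ∑ m ∈ Icc 1 n, q ^ m / qnum q m ^ 2 * ∑ k ∈ Icc 1 m, W k * qbinomRatio q m k :=
        sum_congr rfl fun m hm => by rw [hs m (mem_Icc.mp hm).1]
    _ = ∑ k ∈ Icc 1 n, W k * ∑ m ∈ Icc 1 n, q ^ m / qnum q m ^ 2 * qbinomRatio q m k :=
        sum_mul_sum_qbinomRatio_comm q _ W n
    _ = _ := sum_congr rfl fun k hk => by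
        rw [sum_pow_div_qnum_sq_mul_qbinomRatio hq (by grind)]; ring

lemma qHstar_one_cons {q : ℝ} (hq : |q| < 1) (hq0 : q ≠ 0) {s : List ℕ} {W : ℕ → ℝ}
    (hs : ∀ m, 1 ≤ m → qHstar q s m = ∑ k ∈ Icc 1 m, W k * qbinomRatio q m k) (n : ℕ) :
    qHstar q (1 :: s) n
      = ∑ k ∈ Icc 1 n, q ^ k / qnum q k * W k * qbinomRatio q n k
        + ∑ l ∈ Icc 1 n, (1 + q ^ l) / qnum q l * q ^ (l * l)
          * (∑ k ∈ Icc 1 (l - 1), W k / q ^ (k * k)) * qbinomRatio q n l := by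
  calc qHstar q (1 :: s) n
      = ∑ m ∈ Icc 1 n, q ^ m / qnum q m * ∑ k ∈ Icc 1 m, W k * qbinomRatio q m k :=
        sum_congr rfl fun m hm => by rw [hs m (mem_Icc.mp hm).1, pow_one]
    _ = ∑ k ∈ Icc 1 n, W k * ∑ m ∈ Icc 1 n, q ^ m / qnum q m * qbinomRatio q m k :=
        sum_mul_sum_qbinomRatio_comm q _ W n
    _ = ∑ k ∈ Icc 1 n, q ^ k / qnum q k * W k * qbinomRatio q n k
        + ∑ k ∈ Icc 1 n, ∑ l ∈ Icc (k + 1) n,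
          W k * ((1 + q ^ l) / qnum q l * (q ^ (l * l) / q ^ (k * k)) * qbinomRatio q n l) := by
        rw [← sum_add_distrib]
        refine sum_congr rfl fun k hk => ?_
        rw [sum_pow_div_qnum_mul_qbinomRatio hq hq0 (by grind), mul_add, mul_sum]
        ring
    _ = _ := by
        rw [sum_comm' (t' := Icc 1 n) (s' := fun l => Icc 1 (l - 1)) (by grind)]
        congr 1
        refine sum_congr rfl fun l _ => ?_
        rw [mul_sum, sum_mul]
        exact sum_congr rfl fun k _ => by ring

lemma qHstar_replicate_two {q : ℝ} (hq : |q| < 1) (hq0 : q ≠ 0) (b : ℕ) {n : ℕ}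
    (hn : 1 ≤ n) :
    qHstar q (List.replicate b 2) n
      = ∑ k ∈ Icc 1 n,
          -((-1) ^ k * (1 + q ^ k) * q ^ (k * (k - 1) / 2 + b * k) / qnum q k ^ (2 * b))
          * qbinomRatio q n k := by
  induction b generalizing n with
  | zero =>
    simp only [List.replicate_zero, qHstar, zero_mul, add_zero, mul_zero, pow_zero, div_one,
      neg_mul, sum_neg_distrib]
    rw [sum_Icc_neg_one_pow_mul_qbinomRatio hq hq0 (by omega), neg_neg]
  | succ b ih =>
    rw [List.replicate_succ, qHstar_two_cons hq fun m hm => ih hm]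
    exact sum_congr rfl fun k _ => by ring

lemma qHstar_replicate_two_append_one_cons {q : ℝ} (hq : |q| < 1) (hq0 : q ≠ 0) (a b n : ℕ) :
    qHstar q (List.replicate a 2 ++ 1 :: List.replicate b 2) n
      = ∑ k ∈ Icc 1 n,
        (-((1 + q ^ k) / qnum q k ^ (2 * (a + b) + 1) * (-1) ^ k
            * q ^ (k * (k + 1) / 2 + (a + b) * k))
          - (1 + q ^ k) / qnum q k ^ (2 * a + 1) * q ^ (k ^ 2 + a * k)
            * ∑ j ∈ Icc 1 (k - 1),
              (-1) ^ j * (1 + q ^ j) * q ^ (b * j) / (q ^ (j * (j + 1) / 2) * qnum q j ^ (2 * b)))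
          * qbinomRatio q n k := by
  induction a generalizing n with
  | zero =>
    rw [List.replicate_zero, List.nil_append,
      qHstar_one_cons hq hq0 (fun m hm => qHstar_replicate_two hq hq0 b hm), ← sum_add_distrib]
    refine sum_congr rfl fun k hk => ?_
    have hinner : ∑ j ∈ Icc 1 (k - 1),
          -((-1) ^ j * (1 + q ^ j) * q ^ (j * (j - 1) / 2 + b * j) / qnum q j ^ (2 * b))
            / q ^ (j * j)
        = -∑ j ∈ Icc 1 (k - 1),
          (-1) ^ j * (1 + q ^ j) * q ^ (b * j) / (q ^ (j * (j + 1) / 2) * qnum q j ^ (2 * b)) := by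
      rw [← sum_neg_distrib]
      refine sum_congr rfl fun j hj => ?_
      have := qnum_ne_zero hq (show j ≠ 0 by grind)
      rw [← triangle_add_triangle_add_eq_mul_self, pow_add, pow_add, pow_add, pow_triangle_succ]
      field_simp
    rw [hinner, pow_add q (k * (k + 1) / 2), pow_triangle_succ, sq]
    ring
  | succ a ih =>
    rw [List.replicate_succ, List.cons_append, qHstar_two_cons hq fun m _ => ih m]
    refine sum_congr rfl fun k hk => ?_
    have := qnum_ne_zero hq (show k ≠ 0 by grind)
    field_simp
    ring

theorem stmt7_general (q : ℝ) (hq0 : 0 < q) (hq1 : q < 1) (a b n : ℕ) :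
    qHstar q (List.replicate a 2 ++ 1 :: List.replicate b 2) n
    = -∑ k ∈ Finset.Icc 1 n,
        (1 + q ^ k) / qnum q k ^ (2 * (a + b) + 1) * (qbinom q n k / qbinom q (n + k) k) *
          (-1 : ℝ) ^ k * q ^ (k * (k + 1) / 2 + (a + b) * k)
      - ∑ k ∈ Finset.Icc 1 n,
          (1 + q ^ k) / qnum q k ^ (2 * a + 1) * (qbinom q n k / qbinom q (n + k) k) *
            q ^ (k ^ 2 + a * k) *
            ∑ j ∈ Finset.Icc 1 (k - 1),
              (-1 : ℝ) ^ j * (1 + q ^ j) * q ^ (b * j) /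
                (q ^ (j * (j + 1) / 2) * qnum q j ^ (2 * b)) := by
  rw [qHstar_replicate_two_append_one_cons (abs_lt.mpr ⟨by linarith, hq1⟩) hq0.ne',
    ← sum_neg_distrib, ← sum_sub_distrib]
  exact sum_congr rfl fun k _ => by rw [qbinomRatio]; ring

theorem stmt7 (q : ℝ) (hq0 : 0 < q) (hq1 : q < 1) (a b n : ℕ) (hb : 1 ≤ b) (hn : 1 ≤ n) :
    qHstar q (List.replicate a 2 ++ 1 :: List.replicate b 2) n
    = -∑ k ∈ Finset.Icc 1 n,
        (1 + q ^ k) / qnum q k ^ (2 * (a + b) + 1) * (qbinom q n k / qbinom q (n + k) k) *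
          (-1 : ℝ) ^ k * q ^ (k * (k + 1) / 2 + (a + b) * k)
      - ∑ k ∈ Finset.Icc 1 n,
          (1 + q ^ k) / qnum q k ^ (2 * a + 1) * (qbinom q n k / qbinom q (n + k) k) *
            q ^ (k ^ 2 + a * k) *
            ∑ j ∈ Finset.Icc 1 (k - 1),
              (-1 : ℝ) ^ j * (1 + q ^ j) * q ^ (b * j) /
                (q ^ (j * (j + 1) / 2) * qnum q j ^ (2 * b)) :=
  stmt7_general q hq0 hq1 a b n
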